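/- (Power identity) Let I ⊆ ℝ be an open interval and let (H, φ) solve the EdGB FLRW system on I. Then for every t ∈ I with H(t) ≠ 0 the following identity holds: (1 − H(t)^2·exp(φ(t)) + H'(t)/(3·H(t)^2))·φ'(t)^2 + 4·H(t)^3·φ'(t)·exp(φ(t)) + 3·H(t)^6·exp(2φ(t))·(1 + H'(t)/H(t)^2) = 0. -/

import Mathlib

/-!
The Hamiltonian constraint `C = 0` holds on a neighbourhood of `t`, so its time derivative `Ċ`
vanishes at `t` as well. Once `φ''` in `Ċ` is replaced via the scalar field equation, the power
identity with its denominators cleared is the combination `H · Ċ - 2 H' · C`.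
-/

/-- The EdGB FLRW system on a set `I ⊆ ℝ`: `H` is continuously differentiable and
`φ` twice continuously differentiable on `I`, and for every `t ∈ I` the Hamiltonian
constraint `3H² − 3e^φ φ' H³ = φ'²/2` and the scalar field equation
`φ'' = −3Hφ' − 3e^φ H²(H² + H')` hold. -/
def EdGB (H φ : ℝ → ℝ) (I : Set ℝ) : Prop :=
  ContDiffOn ℝ 1 H I ∧ ContDiffOn ℝ 2 φ I ∧
  (∀ t ∈ I, 3 * H t ^ 2 - 3 * Real.exp (φ t) * deriv φ t * H t ^ 3 = (deriv φ t) ^ 2 / 2) ∧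
  (∀ t ∈ I, deriv (deriv φ) t =
      -3 * H t * deriv φ t - 3 * Real.exp (φ t) * H t ^ 2 * (H t ^ 2 + deriv H t))

open Real

theorem power_identity_of_constraints {h h' p q e : ℝ} (hh : h ≠ 0)
    (hcon : 3 * h ^ 2 - 3 * e * p * h ^ 3 = p ^ 2 / 2)
    (hdcon : 6 * h * h' - 3 * e * ((p * p + q) * h ^ 3 + 3 * p * h ^ 2 * h') - p * q = 0)
    (hfield : q = -3 * h * p - 3 * e * h ^ 2 * (h ^ 2 + h')) :
    (1 - h ^ 2 * e + h' / (3 * h ^ 2)) * p ^ 2 + 4 * h ^ 3 * p * e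
      + 3 * h ^ 6 * e ^ 2 * (1 + h' / h ^ 2) = 0 := by
  subst hfield
  field_simp
  linear_combination h * hdcon - 2 * h' * hcon

theorem hasDerivAt_hamiltonian_residual {H φ ψ : ℝ → ℝ} {H' φ' ψ' t : ℝ}
    (hH : HasDerivAt H H' t) (hφ : HasDerivAt φ φ' t) (hψ : HasDerivAt ψ ψ' t) :
    HasDerivAt (fun s => 3 * H s ^ 2 - 3 * exp (φ s) * ψ s * H s ^ 3 - ψ s ^ 2 / 2)
      (6 * H t * H' - 3 * exp (φ t) * ((φ' * ψ t + ψ') * H t ^ 3 + 3 * ψ t * H t ^ 2 * H')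
        - ψ t * ψ') t := by
  have hexp : HasDerivAt (fun s => exp (φ s)) (exp (φ t) * φ') t := hφ.exp
  refine ((((hH.fun_pow 2).const_mul 3).fun_sub
    (((hexp.const_mul 3).fun_mul hψ).fun_mul (hH.fun_pow 3))).fun_sub
    ((hψ.fun_pow 2).div_const 2)).congr_deriv ?_
  ring

namespace EdGB

variable {H φ : ℝ → ℝ} {I : Set ℝ} {t : ℝ}

theorem hamiltonian_constraint_deriv (hI : IsOpen I) (hsys : EdGB H φ I) (ht : t ∈ I) :
    6 * H t * deriv H t - 3 * exp (φ t) * ((deriv φ t * deriv φ t + deriv (deriv φ) t) * H t ^ 3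
        + 3 * deriv φ t * H t ^ 2 * deriv H t) - deriv φ t * deriv (deriv φ) t = 0 := by
  obtain ⟨hHreg, hφreg, hcon, -⟩ := hsys
  have hnhds : I ∈ nhds t := hI.mem_nhds ht
  have hφ'reg : ContDiffOn ℝ 1 (deriv φ) I :=
    hφreg.deriv_of_isOpen hI (by norm_num)
  have hres := hasDerivAt_hamiltonian_residual
    ((hHreg.contDiffAt hnhds).differentiableAt one_ne_zero).hasDerivAt
    ((hφreg.contDiffAt hnhds).differentiableAt two_ne_zero).hasDerivAt
    ((hφ'reg.contDiffAt hnhds).differentiableAt one_ne_zero).hasDerivAt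
  have hzero : (fun s => 3 * H s ^ 2 - 3 * exp (φ s) * deriv φ s * H s ^ 3
      - deriv φ s ^ 2 / 2) =ᶠ[nhds t] fun _ => 0 := by
    filter_upwards [hnhds] with s hs
    rw [hcon s hs, sub_self]
  rw [← hres.deriv, hzero.deriv_eq, deriv_const]

theorem power_identity (hI : IsOpen I) (hsys : EdGB H φ I) (ht : t ∈ I) (hH : H t ≠ 0) :
    (1 - H t ^ 2 * exp (φ t) + deriv H t / (3 * H t ^ 2)) * (deriv φ t) ^ 2
      + 4 * H t ^ 3 * deriv φ t * exp (φ t)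
      + 3 * H t ^ 6 * exp (2 * φ t) * (1 + deriv H t / H t ^ 2) = 0 := by
  rw [show 2 * φ t = φ t + φ t by ring, exp_add, ← sq]
  exact power_identity_of_constraints hH (hsys.2.2.1 t ht)
    (hamiltonian_constraint_deriv hI hsys ht) (hsys.2.2.2 t ht)

end EdGB

theorem stmt_3 (a b : EReal) (H φ : ℝ → ℝ)
    (hsys : EdGB H φ {t : ℝ | a < (t : EReal) ∧ (t : EReal) < b}) :
    ∀ t : ℝ, a < (t : EReal) → (t : EReal) < b → H t ≠ 0 →
      (1 - H t ^ 2 * Real.exp (φ t) + deriv H t / (3 * H t ^ 2)) * (deriv φ t) ^ 2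
        + 4 * H t ^ 3 * deriv φ t * Real.exp (φ t)
        + 3 * H t ^ 6 * Real.exp (2 * φ t) * (1 + deriv H t / H t ^ 2) = 0 := by
  intro t ha hb hH
  have hI : IsOpen {t : ℝ | a < (t : EReal) ∧ (t : EReal) < b} :=
    isOpen_Ioo.preimage continuous_coe_real_ereal
  exact hsys.power_identity hI ⟨ha, hb⟩ hH
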